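/- For every n ≥ 1 and every function f : {0,1}^n → ℝ, ‖ℒ⁻f‖₂² ≥ 𝔈⁻(f). (This is the lower bound λ⁻(H_n) ≥ 1 on the dynamical spectral gap of the directed hypercube.) -/

import Mathlib

/-!
Write `∂ᵢf(x) = f(x^{i→1}) − f(x^{i→0})` and `m = min 0`. Then `ℒ^{(i)}f(x) = ±½ m(∂ᵢf(x))` with
sign `+` iff `xᵢ = 0`, so the diagonal part of `‖Σᵢ ℒ^{(i)}f‖₂²` is exactly `𝔈⁻(f)`, and it
suffices to show `⟨ℒ^{(i)}f, ℒ^{(j)}f⟩ ≥ 0` for `i ≠ j`. Since `ℒ^{(i)}f` is odd under flipping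
bit `i`, this inner product is a quarter of the mean of
`(ℒ^{(i)}f(x) − ℒ^{(i)}f(x^⊕j)) (ℒ^{(j)}f(x) − ℒ^{(j)}f(x^⊕i))`.
If `a, b, c, d` are the values of `f` on the square through `x` in directions `i, j` (`b`: bit `i`
set, `c`: bit `j` set, `d`: both), that product is `¼ (m(b − a) − m(d − c)) (m(c − a) − m(d − b))`,
which is nonnegative because `m` is monotone and `(b − a) − (d − c) = (c − a) − (d − b)`.
-/

open Finset

/-- Flip the `i`-th bit of `x`. -/
def bflip {n : ℕ} (x : Fin n → Bool) (i : Fin n) : Fin n → Bool := Function.update x i (!x i)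

/-- Set the `i`-th bit of `x` to `b`. -/
def bset {n : ℕ} (x : Fin n → Bool) (i : Fin n) (b : Bool) : Fin n → Bool := Function.update x i b

/-- Density of `A` under the uniform measure on the hypercube. -/
noncomputable def mu {n : ℕ} (A : Finset (Fin n → Bool)) : ℝ := (A.card : ℝ) / 2 ^ n

/-- Expectation of `f` under the uniform measure on `A`. -/
noncomputable def expA {n : ℕ} (A : Finset (Fin n → Bool)) (f : (Fin n → Bool) → ℝ) : ℝ :=
  (∑ x ∈ A, f x) / (A.card : ℝ)

/-- Variance of `f` under the uniform measure on `A`. -/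
noncomputable def varA {n : ℕ} (A : Finset (Fin n → Bool)) (f : (Fin n → Bool) → ℝ) : ℝ :=
  expA A (fun x => (f x - expA A f) ^ 2)

/-- Covariance of `f` and `g` under the uniform measure on `A`. -/
noncomputable def covA {n : ℕ} (A : Finset (Fin n → Bool)) (f g : (Fin n → Bool) → ℝ) : ℝ :=
  expA A (fun x => (f x - expA A f) * (g x - expA A g))

/-- Dirichlet form of `f` on the subgraph of the hypercube induced by `A`. -/
noncomputable def dirA {n : ℕ} (A : Finset (Fin n → Bool)) (f : (Fin n → Bool) → ℝ) : ℝ :=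
  (1 / 4) * expA A (fun x => ∑ i, (f x - f (bflip x i)) ^ 2 * (if bflip x i ∈ A then (1 : ℝ) else 0))

/-- Expectation of `f` under the uniform measure on the whole hypercube. -/
noncomputable def expC {n : ℕ} (f : (Fin n → Bool) → ℝ) : ℝ := (∑ x, f x) / 2 ^ n

/-- The upward boundary (directed Dirichlet energy) `𝔈⁻(f)`. -/
noncomputable def energyMinus {n : ℕ} (f : (Fin n → Bool) → ℝ) : ℝ :=
  (1 / 4) * expC (fun x => ∑ i, (min 0 (f (bset x i true) - f (bset x i false))) ^ 2)

/-- The `L²`-distance of `f` to monotone functions on the hypercube. -/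
noncomputable def dist2mono {n : ℕ} (f : (Fin n → Bool) → ℝ) : ℝ :=
  ⨅ g : {g : (Fin n → Bool) → ℝ // Monotone g}, Real.sqrt (expC fun x => (f x - g.1 x) ^ 2)

/-- `f` is monotone increasing on the poset `A`. -/
def MonoIncrOn {n : ℕ} (A : Finset (Fin n → Bool)) (f : (Fin n → Bool) → ℝ) : Prop :=
  ∀ x ∈ A, ∀ y ∈ A, x ≤ y → f x ≤ f y

/-- `f` is non-constant on `A`. -/
def NonconstOn {n : ℕ} (A : Finset (Fin n → Bool)) (f : (Fin n → Bool) → ℝ) : Prop :=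
  ∃ x ∈ A, ∃ y ∈ A, f x ≠ f y

/-- The approximate FKG ratio `δ(A)`. -/
noncomputable def fkgRatio {n : ℕ} (A : Finset (Fin n → Bool)) : ℝ :=
  min 0 (sInf {r : ℝ | ∃ f g : (Fin n → Bool) → ℝ, MonoIncrOn A f ∧ MonoIncrOn A g ∧
    NonconstOn A f ∧ NonconstOn A g ∧ r = covA A f g / Real.sqrt (varA A f * varA A g)})

/-- The extension operator `T`. -/
noncomputable def extT {n : ℕ} (A : Finset (Fin n → Bool)) (hA : A.Nonempty)
    (f : (Fin n → Bool) → ℝ) : (Fin n → Bool) → ℝ :=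
  fun x => if x ∈ A then f x else A.inf' hA f

/-- The coordinate component `ℒ^{(i)}` of the directed Laplacian. -/
noncomputable def lapI {n : ℕ} (f : (Fin n → Bool) → ℝ) (i : Fin n) (x : Fin n → Bool) : ℝ :=
  (1 / 2) * (f (bflip x i) - f x) * (if f (bset x i true) < f (bset x i false) then (1 : ℝ) else 0)

/-- The directed Laplacian `ℒ⁻`. -/
noncomputable def lapMinus {n : ℕ} (f : (Fin n → Bool) → ℝ) (x : Fin n → Bool) : ℝ :=
  ∑ i, lapI f i x

theorem Monotone.sub_mul_sub_nonneg_of_sub_eq {m : ℝ → ℝ} (hm : Monotone m) {p q r s : ℝ}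
    (h : p - q = r - s) : 0 ≤ (m p - m q) * (m r - m s) := by
  rcases le_total q p with hqp | hpq
  · exact mul_nonneg (sub_nonneg.2 (hm hqp)) (sub_nonneg.2 (hm (by linarith)))
  · exact mul_nonneg_of_nonpos_of_nonpos (sub_nonpos.2 (hm hpq)) (sub_nonpos.2 (hm (by linarith)))

theorem Function.Involutive.sum_comp {α M : Type*} [Fintype α] [AddCommMonoid M] {σ : α → α}
    (hσ : Function.Involutive σ) (F : α → M) : ∑ x, F (σ x) = ∑ x, F x :=
  Equiv.sum_comp (hσ.toPerm σ) F

theorem four_mul_sum_mul_eq_of_odd {α : Type*} [Fintype α] {σ τ : α → α}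
    (hσ : Function.Involutive σ) (hτ : Function.Involutive τ) (hστ : ∀ x, σ (τ x) = τ (σ x))
    {u v : α → ℝ} (hu : ∀ x, u (σ x) = -u x) (hv : ∀ x, v (τ x) = -v x) :
    4 * ∑ x, u x * v x = ∑ x, (u x - u (τ x)) * (v x - v (σ x)) := by
  have h₁ : ∑ x, u x * v (σ x) = -∑ x, u x * v x := by
    rw [← hσ.sum_comp, ← Finset.sum_neg_distrib]
    simp only [hσ _, hu, neg_mul]
  have h₂ : ∑ x, u (τ x) * v x = -∑ x, u x * v x := by
    rw [← hτ.sum_comp, ← Finset.sum_neg_distrib]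
    simp only [hτ _, hv, mul_neg]
  have h₃ : ∑ x, u (τ x) * v (σ x) = ∑ x, u x * v x := by
    rw [← hσ.sum_comp, ← hτ.sum_comp]
    simp only [← hστ, hσ _, hτ _, hu, hv, neg_mul_neg]
  simp only [sub_mul, mul_sub, Finset.sum_sub_distrib, h₁, h₂, h₃]
  ring

theorem sum_sum_sq_le_sum_sq_sum {ι α : Type*} (s : Finset ι) (t : Finset α) (u : ι → α → ℝ)
    (h : ∀ i ∈ s, ∀ j ∈ s, i ≠ j → 0 ≤ ∑ x ∈ t, u i x * u j x) :
    ∑ x ∈ t, ∑ i ∈ s, u i x ^ 2 ≤ ∑ x ∈ t, (∑ i ∈ s, u i x) ^ 2 := by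
  simp only [sq, Finset.sum_mul_sum]
  rw [Finset.sum_comm, Finset.sum_comm (s := t)]
  refine Finset.sum_le_sum fun i hi => ?_
  rw [Finset.sum_comm]
  refine Finset.single_le_sum (f := fun j => ∑ x ∈ t, u i x * u j x) (fun j hj => ?_) hi
  rcases eq_or_ne i j with rfl | hij
  · exact Finset.sum_nonneg fun x _ => mul_self_nonneg _
  · exact h i hi j hj hij

theorem ite_mul_sub_apply_not (g : Bool → ℝ) (c : Bool) :
    (if c then -1 else 1) * (g c - g !c) = g false - g true := by
  cases c <;> simp only [Bool.not_false, Bool.not_true, if_true] <;> norm_num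

section Hypercube

variable {n : ℕ} (f : (Fin n → Bool) → ℝ)

theorem bflip_involutive (i : Fin n) : Function.Involutive (bflip · i) := by
  intro x
  simp [bflip]

theorem bflip_comm {i j : Fin n} (hij : i ≠ j) (x : Fin n → Bool) :
    bflip (bflip x j) i = bflip (bflip x i) j := by
  simp only [bflip, Function.update_of_ne hij, Function.update_of_ne hij.symm]
  exact Function.update_comm hij.symm _ _ _

theorem bflip_apply_of_ne {i j : Fin n} (hij : i ≠ j) (x : Fin n → Bool) :
    bflip x j i = x i :=
  Function.update_of_ne hij _ _

theorem bset_bflip (x : Fin n → Bool) (i : Fin n) (b : Bool) :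
    bset (bflip x i) i b = bset x i b := by
  simp [bset, bflip]

def bderiv (i : Fin n) (x : Fin n → Bool) : ℝ :=
  f (bset x i true) - f (bset x i false)

theorem bderiv_bflip (i : Fin n) (x : Fin n → Bool) :
    bderiv f i (bflip x i) = bderiv f i x := by
  simp only [bderiv, bset_bflip]

theorem lapI_eq (i : Fin n) (x : Fin n → Bool) :
    lapI f i x = (if x i then -1 else 1) / 2 * min 0 (bderiv f i x) := by
  have hx : f x = f (bset x i (x i)) := by rw [bset, Function.update_eq_self]
  rw [lapI, bderiv, show bflip x i = bset x i (!x i) from rfl, hx]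
  cases x i <;> simp only [Bool.not_false, Bool.not_true] <;> split_ifs <;> grind

theorem lapI_sq (i : Fin n) (x : Fin n → Bool) :
    lapI f i x ^ 2 = 1 / 4 * min 0 (bderiv f i x) ^ 2 := by
  rw [lapI_eq]
  split_ifs <;> ring

theorem lapI_bflip (i : Fin n) (x : Fin n → Bool) :
    lapI f i (bflip x i) = -lapI f i x := by
  rw [lapI_eq, lapI_eq, bderiv_bflip, bflip, Function.update_self]
  cases x i <;> norm_num

theorem lapI_sub_mul_lapI_sub_nonneg {i j : Fin n} (hij : i ≠ j)
    (x : Fin n → Bool) :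
    0 ≤ (lapI f i x - lapI f i (bflip x j)) * (lapI f j x - lapI f j (bflip x i)) := by
  set q : Bool → Bool → ℝ := fun b c => f (bset (bset x i b) j c)
  have hi : ∀ c, bderiv f i (bset x j c) = q true c - q false c := fun c => by
    simp only [q, bderiv, bset, Function.update_comm hij]
  have hj : ∀ b, bderiv f j (bset x i b) = q b true - q b false := fun _ => rfl
  have e₁ : bderiv f i x = q true (x j) - q false (x j) := by
    rw [← hi, bset, Function.update_eq_self]
  have e₂ : bderiv f j x = q (x i) true - q (x i) false := by
    rw [← hj, bset, Function.update_eq_self]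
  rw [lapI_eq, lapI_eq, lapI_eq, lapI_eq, bflip_apply_of_ne hij, bflip_apply_of_ne hij.symm,
    e₁, e₂, show bflip x j = bset x j (!x j) from rfl, show bflip x i = bset x i (!x i) from rfl,
    hi, hj]
  have hm : Monotone (min 0 : ℝ → ℝ) := fun _ _ h => min_le_min_left 0 h
  calc 0 ≤ 1 / 4 * ((min 0 (q true false - q false false) - min 0 (q true true - q false true)) *
        (min 0 (q false true - q false false) - min 0 (q true true - q true false))) :=
        mul_nonneg (by norm_num) (hm.sub_mul_sub_nonneg_of_sub_eq (by ring))
    _ = _ := by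
      rw [← ite_mul_sub_apply_not (fun c => min 0 (q true c - q false c)) (x j),
        ← ite_mul_sub_apply_not (fun b => min 0 (q b true - q b false)) (x i)]
      ring

theorem sum_lapI_mul_lapI_nonneg {i j : Fin n} (hij : i ≠ j) :
    0 ≤ ∑ x, lapI f i x * lapI f j x := by
  have h := four_mul_sum_mul_eq_of_odd (bflip_involutive i) (bflip_involutive j) (bflip_comm hij)
    (lapI_bflip f i) (lapI_bflip f j)
  linarith [Finset.sum_nonneg fun x (_ : x ∈ univ) => lapI_sub_mul_lapI_sub_nonneg f hij x]

end Hypercube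

theorem stmt_15_general (n : ℕ) (f : (Fin n → Bool) → ℝ) :
    expC (fun x => lapMinus f x ^ 2) ≥ energyMinus f := by
  have h := sum_sum_sq_le_sum_sq_sum univ univ (lapI f) fun i _ j _ hij =>
    sum_lapI_mul_lapI_nonneg f hij
  simp only [lapI_sq, ← Finset.mul_sum] at h
  rw [ge_iff_le, energyMinus, expC, expC, ← mul_div_assoc]
  exact div_le_div_of_nonneg_right h (by positivity)

/-- lower bound `λ⁻(H_n) ≥ 1`: `‖ℒ⁻f‖₂² ≥ 𝔈⁻(f)`. -/
theorem stmt_15 (n : ℕ) (hn : 1 ≤ n) (f : (Fin n → Bool) → ℝ) :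
    expC (fun x => lapMinus f x ^ 2) ≥ energyMinus f :=
  stmt_15_general n f
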